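/- Let r ≥ 1, let λ_1 ≥ … ≥ λ_r ≥ 0 and μ_1 ≥ … ≥ μ_r ≥ 0 be integers with μ_i ≤ λ_i for all i, and let f = (f_1,…,f_r), g = (g_1,…,g_r) be r-tuples of positive integers. If for every pair (i,j) with 1 ≤ i,j ≤ r such that f_i < g_j − 1 one has f_i + λ_i − i ≥ g_j + μ_j − j, then G_{λ/μ,f/g}(x) = G_{λ/μ,[[f/g]]}(x). -/

import Mathlib

/- Common setup: `Rx = ℂ[x₁,x₂,…]`, `Lz = Rx((z))`, and `Rg = 𝓡 = Rx((z))[[β]]`. -/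

noncomputable section

/-- The polynomial ring `R = ℂ[x_1, x_2, …]`. -/
abbrev Rx : Type := MvPolynomial ℕ ℂ

/-- Formal Laurent series in `z` over `R`. -/
abbrev Lz : Type := LaurentSeries Rx

/-- The ring `𝓡 = R((z))[[β]]`: formal power series in `β` with coefficients in `R((z))`. -/
abbrev Rg : Type := PowerSeries Lz

/-- The variable `x_k` (for `k ≥ 1`), viewed in `𝓡`. -/
def xc (k : ℤ) : Rg := PowerSeries.C (R := Lz) (HahnSeries.C (MvPolynomial.X k.toNat))

/-- The variable `z`, viewed in `𝓡`. -/
def zz : Rg := PowerSeries.C (R := Lz) (HahnSeries.single 1 1)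

/-- The element `z⁻¹`, viewed in `𝓡`. -/
def zinv : Rg := PowerSeries.C (R := Lz) (HahnSeries.single (-1) 1)

/-- The variable `β` of `𝓡`. -/
def βv : Rg := PowerSeries.X

/-- The unit `u = 1 + β z⁻¹` of `𝓡`. -/
def uu : Rg := 1 + βv * zinv

/-- Integer powers of a ring element, using `Ring.inverse` for negative exponents. -/
def zpow' {A : Type} [CommRing A] (a : A) (m : ℤ) : A :=
  if 0 ≤ m then a ^ m.toNat else Ring.inverse a ^ (-m).toNat

/-- The signed product `∏_{k=q}^{p} c k`:  equal to `c q ⋯ c p` if `p ≥ q`, to `1` if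
`p = q - 1`, and to `(c (p+1) ⋯ c (q-1))⁻¹` if `p < q - 1`. -/
def sProd' {A : Type} [CommRing A] (c : ℤ → A) (q p : ℤ) : A :=
  if q ≤ p + 1 then ∏ k ∈ Finset.Icc q p, c k
  else Ring.inverse (∏ k ∈ Finset.Icc (p + 1) (q - 1), c k)

/-- The generating series `Σ_{n∈ℤ} G_n^{[[p/q]]}(x) zⁿ
  = (1+βz⁻¹)⁻¹ ∏_{k=q}^{p} (1+βx_k)(1-x_k z)⁻¹ ∈ 𝓡` (signed product convention). -/
def GGser (p q : ℤ) : Rg :=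
  Ring.inverse uu * sProd' (fun k => (1 + βv * xc k) * Ring.inverse (1 - xc k * zz)) q p

/-- The generating series `Σ_{n∈ℤ} G_n^{[p/q]}(x) zⁿ ∈ 𝓡`,
  where the product is declared to be `1` whenever `p < q`. -/
def Gunser (p q : ℤ) : Rg :=
  Ring.inverse uu *
    (if q ≤ p then ∏ k ∈ Finset.Icc q p, (1 + βv * xc k) * Ring.inverse (1 - xc k * zz) else 1)

/-- The coefficient of `zⁿ` of an element of `𝓡`, read off coefficientwise in `β`;
  it is an element of `R[[β]]`. -/
def coeffZ (n : ℤ) (F : Rg) : PowerSeries Rx :=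
  PowerSeries.mk fun m => ((PowerSeries.coeff (R := Lz) m) F).coeff n

/-- `G_n^{[[p/q]]}(x) ∈ R[[β]]`. -/
def Gbb (p q n : ℤ) : PowerSeries Rx := coeffZ n (GGser p q)

/-- `G_n^{[p/q]}(x) ∈ R[[β]]`. -/
def Gun (p q n : ℤ) : PowerSeries Rx := coeffZ n (Gunser p q)

/-- The β-adically convergent sum `Σ_{s=0}^{∞} C(c,s) βˢ · G (d + s) ∈ R[[β]]`, where
  `C(c,s)` is the generalized binomial coefficient `Ring.choose` of the integer `c`. -/
def betaSum (c : ℤ) (G : ℤ → PowerSeries Rx) (d : ℤ) : PowerSeries Rx :=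
  PowerSeries.mk fun m => ∑ s ∈ Finset.range (m + 1),
    ((Ring.choose c s : ℤ) : Rx) * (PowerSeries.coeff (R := Rx) (m - s)) (G (d + s))

end

noncomputable section

/-- `G_{λ/μ,[[f/g]]}(x) = det(Σ_{s≥0} C(i-j,s) βˢ G^{[[f_i/g_j]]}_{λ_i-μ_j-i+j+s}(x))_{1≤i,j≤r}`,
with `0`-based `Fin r` indices (the paper's index `i` is `(i : ℕ) + 1`). -/
def GdetBB (r : ℕ) (lam mu f g : Fin r → ℤ) : PowerSeries Rx :=
  Matrix.det (Matrix.of fun i j : Fin r =>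
    betaSum (((i : ℕ) : ℤ) - ((j : ℕ) : ℤ)) (fun n => Gbb (f i) (g j) n)
      (lam i - mu j - (((i : ℕ) : ℤ) + 1) + (((j : ℕ) : ℤ) + 1)))

/-- `G_{λ/μ,f/g}(x) = det(Σ_{s≥0} C(i-j,s) βˢ G^{[f_i/g_j]}_{λ_i-μ_j-i+j+s}(x))_{1≤i,j≤r}`,
with `0`-based `Fin r` indices (the paper's index `i` is `(i : ℕ) + 1`). -/
def GdetUn (r : ℕ) (lam mu f g : Fin r → ℤ) : PowerSeries Rx :=
  Matrix.det (Matrix.of fun i j : Fin r =>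
    betaSum (((i : ℕ) : ℤ) - ((j : ℕ) : ℤ)) (fun n => Gun (f i) (g j) n)
      (lam i - mu j - (((i : ℕ) : ℤ) + 1) + (((j : ℕ) : ℤ) + 1)))

end

/-!
The two determinants agree entry by entry. If `f_i ≥ g_j - 1` the two signed products
coincide. Otherwise the signed product is the inverse of a genuine product, namely
`∏_{k=f_i+1}^{g_j-1} (1 - x_k z)(1 + β x_k)⁻¹`, whose `β`-coefficients have `z`-degree at most
`g_j - f_i - 1`; since `(1 + β z⁻¹)⁻¹` has `z`-degree at most `0`, both `G_n^{[f_i/g_j]}` and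
`G_n^{[[f_i/g_j]]}` vanish for `n ≥ g_j - f_i`. The hypothesis says exactly that every index
`λ_i - μ_j - i + j + s` occurring in the `(i, j)` entry is that large.
-/

theorem Ring.inverse_prod {ι M₀ : Type*} [CommMonoidWithZero M₀] (s : Finset ι) (f : ι → M₀) :
    Ring.inverse (∏ i ∈ s, f i) = ∏ i ∈ s, Ring.inverse (f i) := by
  classical
  induction s using Finset.induction_on with
  | empty => simp [Ring.inverse_one]
  | insert a s ha ih =>
    rw [Finset.prod_insert ha, Finset.prod_insert ha, Ring.mul_inverse_rev, ih, mul_comm]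

namespace HahnSeries

theorem support_sum_subset {Γ R ι : Type*} [PartialOrder Γ] [AddCommMonoid R] {s : Finset ι}
    {x : ι → HahnSeries Γ R} {t : Set Γ} (hx : ∀ i ∈ s, (x i).support ⊆ t) :
    (∑ i ∈ s, x i).support ⊆ t :=
  Function.support_subset_iff'.2 fun g hg => by
    rw [coeff_sum]
    exact Finset.sum_eq_zero fun i hi => Function.support_subset_iff'.1 (hx i hi) g hg

theorem support_one_subset_Iic_zero {Γ R : Type*} [Zero Γ] [PartialOrder Γ] [Zero R] [One R] :
    (1 : HahnSeries Γ R).support ⊆ Set.Iic 0 :=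
  support_single_subset.trans (Set.singleton_subset_iff.2 Set.self_mem_Iic)

variable {Γ R : Type*} [AddCommMonoid Γ] [PartialOrder Γ] [IsOrderedCancelAddMonoid Γ]
  [Semiring R]

theorem support_mul_subset_Iic {x y : HahnSeries Γ R} {a b : Γ} (hx : x.support ⊆ Set.Iic a)
    (hy : y.support ⊆ Set.Iic b) : (x * y).support ⊆ Set.Iic (a + b) :=
  support_mul_subset.trans ((Set.add_subset_add hx hy).trans (Set.Iic_add_Iic_subset a b))

theorem support_pow_subset_Iic {x : HahnSeries Γ R} {a : Γ} (hx : x.support ⊆ Set.Iic a)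
    (n : ℕ) : (x ^ n).support ⊆ Set.Iic (n • a) := by
  induction n with
  | zero => simpa using support_one_subset_Iic_zero
  | succ n ih => simpa [pow_succ, succ_nsmul] using support_mul_subset_Iic ih hx

end HahnSeries

namespace PowerSeries

theorem mk_neg_pow_mul_one_add_X_mul_C {A : Type*} [CommRing A] (a : A) :
    mk (fun n => (-a) ^ n) * (1 + X * C a) = 1 := by
  have h := congrArg (rescale (-a)) (mk_one_mul_one_sub_eq_one A)
  rw [map_mul, rescale_mk, map_sub, map_one, rescale_X] at h
  simpa [mul_comm, sub_eq_add_neg] using h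

theorem inverse_one_add_X_mul_C {A : Type*} [CommRing A] (a : A) :
    Ring.inverse (1 + X * C a) = mk fun n => (-a) ^ n :=
  Ring.inverse_unit <|
    Units.mkOfMulEqOne _ _ ((mul_comm _ _).trans (mk_neg_pow_mul_one_add_X_mul_C a))

variable {Γ R : Type*} [AddCommMonoid Γ] [PartialOrder Γ] [IsOrderedCancelAddMonoid Γ]
  [CommSemiring R]

def CoeffSupportLE (N : Γ) (F : PowerSeries (HahnSeries Γ R)) : Prop :=
  ∀ m, (coeff m F).support ⊆ Set.Iic N

variable {N M : Γ} {F G : PowerSeries (HahnSeries Γ R)}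

theorem CoeffSupportLE.mono (hF : CoeffSupportLE N F) (h : N ≤ M) : CoeffSupportLE M F :=
  fun m => (hF m).trans (Set.Iic_subset_Iic.2 h)

theorem CoeffSupportLE.mul (hF : CoeffSupportLE N F) (hG : CoeffSupportLE M G) :
    CoeffSupportLE (N + M) (F * G) := fun m => by
  rw [coeff_mul]
  exact HahnSeries.support_sum_subset fun p _ => HahnSeries.support_mul_subset_Iic (hF _) (hG _)

theorem coeffSupportLE_C {b : HahnSeries Γ R} (hb : b.support ⊆ Set.Iic N) :
    CoeffSupportLE N (C b) := fun m => by
  rw [coeff_C]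
  split_ifs
  · exact hb
  · simp

theorem coeffSupportLE_one : CoeffSupportLE (0 : Γ) (1 : PowerSeries (HahnSeries Γ R)) :=
  coeffSupportLE_C HahnSeries.support_one_subset_Iic_zero

theorem CoeffSupportLE.prod {ι : Type*} (s : Finset ι) {N : ι → Γ}
    {F : ι → PowerSeries (HahnSeries Γ R)} (hF : ∀ i ∈ s, CoeffSupportLE (N i) (F i)) :
    CoeffSupportLE (∑ i ∈ s, N i) (∏ i ∈ s, F i) := by
  classical
  induction s using Finset.induction_on with
  | empty => simpa using coeffSupportLE_one
  | insert a s ha ih =>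
    rw [Finset.prod_insert ha, Finset.sum_insert ha]
    exact (hF a (Finset.mem_insert_self a s)).mul
      (ih fun i hi => hF i (Finset.mem_insert_of_mem hi))

theorem coeffSupportLE_mk_pow {a : HahnSeries Γ R} (ha : a.support ⊆ Set.Iic 0) :
    CoeffSupportLE (0 : Γ) (mk fun n => a ^ n) := fun m => by
  rw [coeff_mk]
  simpa using HahnSeries.support_pow_subset_Iic ha m

end PowerSeries

open PowerSeries

theorem coeffSupportLE_inverse_uu : CoeffSupportLE 0 (Ring.inverse uu) := by
  rw [uu, βv, zinv, inverse_one_add_X_mul_C]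
  refine coeffSupportLE_mk_pow (HahnSeries.support_neg.trans_subset ?_)
  exact HahnSeries.support_single_subset.trans (by simp)

theorem coeffSupportLE_inverse_one_add_βv_mul_xc (k : ℤ) :
    CoeffSupportLE 0 (Ring.inverse (1 + βv * xc k)) := by
  rw [βv, xc, inverse_one_add_X_mul_C]
  refine coeffSupportLE_mk_pow (HahnSeries.support_neg.trans_subset ?_)
  exact HahnSeries.support_single_subset.trans (by simp)

theorem one_sub_xc_mul_zz (k : ℤ) :
    1 - xc k * zz = C (1 - HahnSeries.single 1 (MvPolynomial.X k.toNat) : Lz) := by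
  rw [xc, zz, ← map_mul, ← map_one C, ← map_sub, HahnSeries.C_apply,
    HahnSeries.single_mul_single, zero_add, mul_one]

theorem isUnit_one_sub_xc_mul_zz (k : ℤ) : IsUnit (1 - xc k * zz) := by
  rw [one_sub_xc_mul_zz]
  refine (HahnSeries.isUnit_of_orderTop_pos ?_).map C
  rw [sub_sub_cancel_left, HahnSeries.orderTop_neg]
  exact lt_of_lt_of_le (by norm_num) HahnSeries.orderTop_single_le

theorem coeffSupportLE_one_sub_xc_mul_zz (k : ℤ) : CoeffSupportLE 1 (1 - xc k * zz) := by
  rw [one_sub_xc_mul_zz]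
  refine coeffSupportLE_C ((HahnSeries.support_sub_subset _ _).trans (Set.union_subset ?_ ?_))
  · exact HahnSeries.support_one_subset_Iic_zero.trans (Set.Iic_subset_Iic.2 zero_le_one)
  · exact HahnSeries.support_single_subset.trans (by simp)

theorem GGser_of_lt {p q : ℤ} (h : p + 1 < q) :
    GGser p q = Ring.inverse uu *
      ∏ k ∈ Finset.Icc (p + 1) (q - 1), (1 - xc k * zz) * Ring.inverse (1 + βv * xc k) := by
  rw [GGser, sProd', if_neg (by omega), Ring.inverse_prod]
  refine congrArg _ (Finset.prod_congr rfl fun k _ => ?_)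
  rw [Ring.mul_inverse_rev, Ring.inverse_inverse (isUnit_one_sub_xc_mul_zz k)]

theorem coeffSupportLE_GGser {p q : ℤ} (h : p + 1 < q) :
    CoeffSupportLE (q - 1 - p) (GGser p q) := by
  rw [GGser_of_lt h]
  have hfactor (k : ℤ) :
      CoeffSupportLE (1 + 0) ((1 - xc k * zz) * Ring.inverse (1 + βv * xc k)) :=
    (coeffSupportLE_one_sub_xc_mul_zz k).mul (coeffSupportLE_inverse_one_add_βv_mul_xc k)
  refine (coeffSupportLE_inverse_uu.mul (CoeffSupportLE.prod _ fun k _ => hfactor k)).mono ?_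
  simp only [add_zero, zero_add, Finset.sum_const, Int.card_Icc, nsmul_one]
  omega

theorem Gunser_of_lt {p q : ℤ} (h : p < q) : Gunser p q = Ring.inverse uu := by
  rw [Gunser, if_neg (not_le.2 h), mul_one]

theorem Gunser_of_le {p q : ℤ} (h : q ≤ p + 1) : Gunser p q = GGser p q := by
  rw [Gunser, GGser, sProd', if_pos h]
  split_ifs
  · rfl
  · rw [Finset.Icc_eq_empty (by omega), Finset.prod_empty]

theorem coeffZ_eq_zero {N n : ℤ} {F : Rg} (hF : CoeffSupportLE N F) (hn : N < n) :
    coeffZ n F = 0 :=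
  PowerSeries.ext fun m => by
    rw [coeffZ, coeff_mk, map_zero]
    exact Function.support_subset_iff'.1 (hF m) n (Set.notMem_Iic.2 hn)

theorem Gun_eq_Gbb {p q n : ℤ} (h : p + 1 < q → q - p ≤ n) : Gun p q n = Gbb p q n := by
  by_cases hpq : p + 1 < q
  · rw [Gun, Gbb, Gunser_of_lt (by omega), coeffZ_eq_zero coeffSupportLE_inverse_uu (by omega),
      coeffZ_eq_zero (coeffSupportLE_GGser hpq) (by omega)]
  · rw [Gun, Gbb, Gunser_of_le (by omega)]

theorem betaSum_congr {c d : ℤ} {G G' : ℤ → PowerSeries Rx}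
    (h : ∀ n, d ≤ n → G n = G' n) :
    betaSum c G d = betaSum c G' d :=
  congrArg mk <| funext fun _ => Finset.sum_congr rfl fun s _ => by rw [h (d + s) (by omega)]

theorem stmt6_general (r : ℕ) (lam mu f g : Fin r → ℤ)
    (hcond : ∀ i j : Fin r, f i < g j - 1 →
      g j + mu j - (((j : ℕ) : ℤ) + 1) ≤ f i + lam i - (((i : ℕ) : ℤ) + 1)) :
    GdetUn r lam mu f g = GdetBB r lam mu f g := by
  refine congrArg Matrix.det <| Matrix.ext fun i j =>
    betaSum_congr fun n hn => Gun_eq_Gbb fun h => ?_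
  have := hcond i j (by omega)
  omega

/-- if for every pair `(i,j)` with `f_i < g_j - 1` one has
`f_i + λ_i - i ≥ g_j + μ_j - j` (with the paper's `1`-based indices `i = (i:ℕ)+1`),
then `G_{λ/μ,f/g}(x) = G_{λ/μ,[[f/g]]}(x)`. -/
theorem stmt6 (r : ℕ) (hr : 1 ≤ r) (lam mu f g : Fin r → ℤ)
    (hlam : Antitone lam) (hlam0 : ∀ i, 0 ≤ lam i)
    (hmu : Antitone mu) (hmu0 : ∀ i, 0 ≤ mu i)
    (hml : ∀ i, mu i ≤ lam i) (hf : ∀ i, 1 ≤ f i) (hg : ∀ i, 1 ≤ g i)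
    (hcond : ∀ i j : Fin r, f i < g j - 1 →
      g j + mu j - (((j : ℕ) : ℤ) + 1) ≤ f i + lam i - (((i : ℕ) : ℤ) + 1)) :
    GdetUn r lam mu f g = GdetBB r lam mu f g :=
  stmt6_general r lam mu f g hcond
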